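/- There exist constants c₁, c₂ > 0 such that for every n ≥ 2, c₁·log n ≤ sup{ ‖x‖₂ / ‖x‖_{Z_2^n} : x ∈ ℝⁿ×ℝⁿ, x ≠ 0 } ≤ c₂·log n; that is, the operator norm of the identity map from Z_2^n to ℓ_2^{2n} is of order log n. -/

import Mathlib

open scoped BigOperators

/-- The Euclidean norm on `ℝⁿ`. -/
noncomputable def l2 {n : ℕ} (b : Fin n → ℝ) : ℝ := Real.sqrt (∑ j, b j ^ 2)

/-- The Kalton–Peck map `F(b)_j = b_j log(|b_j|/‖b‖₂)`, with `F(b)_j = 0` when `b_j = 0`. -/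
noncomputable def KPF {n : ℕ} (b : Fin n → ℝ) : Fin n → ℝ :=
  fun j => if b j = 0 then 0 else b j * Real.log (|b j| / l2 b)

/-- The Kalton–Peck quasi-norm `‖(a,b)‖ = ‖b‖₂ + ‖a - F(b)‖₂` on `ℝⁿ × ℝⁿ`. -/
noncomputable def znorm {n : ℕ} (x : (Fin n → ℝ) × (Fin n → ℝ)) : ℝ :=
  l2 x.2 + l2 (x.1 - KPF x.2)

/-- Operator "norm" `sup_{x ≠ 0} N_W(T x) / N_V(x)` of a map `T` between spaces
equipped with (quasi-)norms `N_V`, `N_W`. -/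
noncomputable def ratioSup {V W : Type*} [Zero V] (NV : V → ℝ) (NW : W → ℝ) (T : V → W) : ℝ :=
  ⨆ x : {x : V // x ≠ 0}, NW (T x.1) / NV x.1

/-- The Euclidean norm on `ℝⁿ × ℝⁿ ≅ ℝ^{2n}`. -/
noncomputable def l2p {n : ℕ} (x : (Fin n → ℝ) × (Fin n → ℝ)) : ℝ :=
  Real.sqrt ((∑ j, x.1 j ^ 2) + ∑ j, x.2 j ^ 2)

/-! Put `t_j = |b_j| / ‖b‖₂ ∈ [0, 1]`, so that `F(b)_j² = ‖b‖₂² (t_j log t_j)²`.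
Coordinates with `t_j ≥ 1/n` have `|log t_j| ≤ log n`, and the others contribute at most
`t_j · (t_j log² t_j) ≤ 4/n` each, whence `‖F(b)‖₂ ≤ (log n + 2) ‖b‖₂` and
`‖(a, b)‖₂ ≤ ‖a - F(b)‖₂ + ‖F(b)‖₂ + ‖b‖₂ ≤ (log n + 3) ‖(a, b)‖_{Z_2^n}`.
Conversely, `(F(𝟙), 𝟙)` has quasi-norm `‖𝟙‖₂ = √n`, while `F(𝟙)` is the constant vector
`-(log n)/2`, of Euclidean norm `√n (log n)/2`. -/

open Real Finset

lemma l2_eq_norm {n : ℕ} (b : Fin n → ℝ) :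
    l2 b = ‖(WithLp.toLp 2 b : EuclideanSpace ℝ (Fin n))‖ := by
  simp [l2, EuclideanSpace.norm_eq, sq_abs]

lemma l2_nonneg {n : ℕ} (b : Fin n → ℝ) : 0 ≤ l2 b := sqrt_nonneg _

lemma l2_pos {n : ℕ} {b : Fin n → ℝ} (hb : b ≠ 0) : 0 < l2 b := by
  rw [l2_eq_norm, norm_pos_iff]
  simpa using hb

lemma sq_l2 {n : ℕ} (b : Fin n → ℝ) : l2 b ^ 2 = ∑ j, b j ^ 2 := sq_sqrt (by positivity)

lemma l2_le_l2_sub_add {n : ℕ} (a c : Fin n → ℝ) : l2 a ≤ l2 (a - c) + l2 c := by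
  simpa [l2_eq_norm] using
    norm_le_norm_sub_add (WithLp.toLp 2 a : EuclideanSpace ℝ (Fin n)) (WithLp.toLp 2 c)

lemma l2_const (n : ℕ) (c : ℝ) : l2 (fun _ : Fin n => c) = √n * |c| := by
  simp [l2, sqrt_mul, sqrt_sq_eq_abs]

lemma abs_le_l2 {n : ℕ} (b : Fin n → ℝ) (j : Fin n) : |b j| ≤ l2 b := by
  rw [← sqrt_sq_eq_abs]
  exact sqrt_le_sqrt (single_le_sum (f := fun i => b i ^ 2) (fun i _ => sq_nonneg _) (mem_univ j))

lemma l2p_le_l2_add_l2 {n : ℕ} (x : (Fin n → ℝ) × (Fin n → ℝ)) :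
    l2p x ≤ l2 x.1 + l2 x.2 := by
  rw [l2p, sqrt_le_left (add_nonneg (l2_nonneg _) (l2_nonneg _)), ← sq_l2, ← sq_l2]
  nlinarith [l2_nonneg x.1, l2_nonneg x.2]

lemma l2_fst_le_l2p {n : ℕ} (x : (Fin n → ℝ) × (Fin n → ℝ)) : l2 x.1 ≤ l2p x :=
  sqrt_le_sqrt (le_add_of_nonneg_right (by positivity))

lemma mul_log_sq_le_four {t : ℝ} (h0 : 0 ≤ t) (h1 : t ≤ 1) : t * log t ^ 2 ≤ 4 := by
  rcases h0.eq_or_lt with rfl | ht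
  · norm_num
  have hu := abs_log_mul_self_lt (√t) (sqrt_pos.2 ht) (sqrt_le_one.2 h1)
  have hsq : t * log t ^ 2 = 4 * (log √t * √t) ^ 2 := by
    rw [log_sqrt h0, mul_pow, sq_sqrt h0]
    ring
  rw [hsq]
  nlinarith [abs_lt.1 hu]

lemma sq_mul_log_le {t N : ℝ} (h0 : 0 ≤ t) (h1 : t ≤ 1) (hN : 1 ≤ N) :
    (t * log t) ^ 2 ≤ t ^ 2 * log N ^ 2 + 4 / N := by
  have hN0 : 0 < N := zero_lt_one.trans_le hN
  rcases le_or_gt N⁻¹ t with hlarge | hsmall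
  · have hlog : log t ^ 2 ≤ log N ^ 2 := by
      refine sq_le_sq' ?_ (log_nonpos h0 h1 |>.trans (log_nonneg hN))
      simpa [log_inv] using log_le_log (inv_pos.2 hN0) hlarge
    have : 0 ≤ 4 / N := by positivity
    nlinarith [sq_nonneg t]
  · have hsmall' : t * 4 ≤ 4 / N := by
      rw [div_eq_mul_inv]; linarith
    nlinarith [mul_log_sq_le_four h0 h1, sq_nonneg (t * log N)]

lemma KPF_zero (n : ℕ) : KPF (0 : Fin n → ℝ) = 0 := by
  ext j
  simp [KPF]

lemma KPF_apply_sq_le {n : ℕ} (b : Fin n → ℝ) (j : Fin n) :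
    KPF b j ^ 2 ≤ b j ^ 2 * log n ^ 2 + 4 * l2 b ^ 2 / n := by
  by_cases hb : b j = 0
  · simp [KPF, hb]
    positivity
  have hL : 0 < l2 b := (abs_pos.2 hb).trans_le (abs_le_l2 b j)
  set t := |b j| / l2 b
  have hbt : b j ^ 2 = l2 b ^ 2 * t ^ 2 := by
    rw [← sq_abs]
    simp only [t]
    field_simp
  have key := sq_mul_log_le (div_nonneg (abs_nonneg _) hL.le)
    ((div_le_one₀ hL).2 (abs_le_l2 b j)) (Nat.one_le_cast.2 j.pos)
  calc KPF b j ^ 2 = l2 b ^ 2 * (t * log t) ^ 2 := by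
        simp only [KPF, if_neg hb]
        rw [mul_pow, mul_pow, hbt]
        ring
    _ ≤ l2 b ^ 2 * (t ^ 2 * log n ^ 2 + 4 / n) := by gcongr
    _ = _ := by rw [hbt]; ring

lemma l2_KPF_le {n : ℕ} (b : Fin n → ℝ) : l2 (KPF b) ≤ (log n + 2) * l2 b := by
  have hcount : (n : ℝ) * (4 * l2 b ^ 2 / n) ≤ 4 * l2 b ^ 2 := by
    rcases eq_or_ne (n : ℝ) 0 with h | h
    · rw [h, zero_mul]
      positivity
    · rw [mul_div_cancel₀ _ h]
  have hsq : l2 (KPF b) ^ 2 ≤ (log n ^ 2 + 4) * l2 b ^ 2 := by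
    calc l2 (KPF b) ^ 2 ≤ ∑ j, (b j ^ 2 * log n ^ 2 + 4 * l2 b ^ 2 / n) := by
          rw [sq_l2]
          exact sum_le_sum fun j _ => KPF_apply_sq_le b j
      _ = l2 b ^ 2 * log n ^ 2 + n * (4 * l2 b ^ 2 / n) := by
          rw [sum_add_distrib, ← sum_mul, ← sq_l2]
          simp
      _ ≤ (log n ^ 2 + 4) * l2 b ^ 2 := by linarith
  have hlog := log_natCast_nonneg n
  have hb := l2_nonneg b
  refine (pow_le_pow_iff_left₀ (l2_nonneg _) (by positivity) two_ne_zero).1 ?_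
  nlinarith

lemma l2p_le_mul_znorm {n : ℕ} (x : (Fin n → ℝ) × (Fin n → ℝ)) :
    l2p x ≤ (log n + 3) * znorm x := by
  have hsum := l2p_le_l2_add_l2 x
  have htri := l2_le_l2_sub_add x.1 (KPF x.2)
  have hKPF := l2_KPF_le x.2
  have hextra :=
    mul_nonneg (add_nonneg (log_natCast_nonneg n) zero_le_two) (l2_nonneg (x.1 - KPF x.2))
  unfold znorm
  linarith

lemma znorm_pos {n : ℕ} {x : (Fin n → ℝ) × (Fin n → ℝ)} (hx : x ≠ 0) : 0 < znorm x := by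
  by_cases hb : x.2 = 0
  · have ha : x.1 - KPF x.2 ≠ 0 := by
      rw [hb, KPF_zero, sub_zero]
      exact fun ha => hx (Prod.ext ha hb)
    exact add_pos_of_nonneg_of_pos (l2_nonneg _) (l2_pos ha)
  · exact add_pos_of_pos_of_nonneg (l2_pos hb) (l2_nonneg _)

lemma l2_one (n : ℕ) : l2 (1 : Fin n → ℝ) = √n := by
  simp [l2]

lemma KPF_one (n : ℕ) : KPF (1 : Fin n → ℝ) = fun _ => -(log n / 2) := by
  ext j
  simp [KPF, l2_one, log_inv, log_sqrt]

lemma znorm_KPF_self {n : ℕ} (b : Fin n → ℝ) : znorm (KPF b, b) = l2 b := by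
  simp [znorm, l2]

lemma half_log_le_l2p_div_znorm {n : ℕ} (hn : n ≠ 0) :
    log n / 2 ≤ l2p (KPF (1 : Fin n → ℝ), 1) / znorm (KPF (1 : Fin n → ℝ), 1) := by
  have hsqrt : 0 < √(n : ℝ) := sqrt_pos.2 (by positivity)
  rw [znorm_KPF_self, l2_one, le_div_iff₀ hsqrt]
  calc log n / 2 * √n ≤ l2 (KPF (1 : Fin n → ℝ)) := by
        rw [KPF_one, l2_const, abs_neg, mul_comm]
        exact mul_le_mul_of_nonneg_left (le_abs_self _) hsqrt.le
    _ ≤ _ := l2_fst_le_l2p (KPF 1, 1)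

section ratioSup

variable {V W : Type*} [Zero V] {NV : V → ℝ} {NW : W → ℝ} {T : V → W} {C : ℝ}

lemma ratioSup_le (hC : 0 ≤ C) (hpos : ∀ x ≠ 0, 0 < NV x)
    (h : ∀ x ≠ 0, NW (T x) ≤ C * NV x) : ratioSup NV NW T ≤ C :=
  Real.iSup_le (fun x => (div_le_iff₀ (hpos x.1 x.2)).2 (h x.1 x.2)) hC

lemma div_le_ratioSup (hpos : ∀ x ≠ 0, 0 < NV x) (h : ∀ x ≠ 0, NW (T x) ≤ C * NV x) {x : V}
    (hx : x ≠ 0) : NW (T x) / NV x ≤ ratioSup NV NW T :=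
  le_ciSup (f := fun y : {y : V // y ≠ 0} => NW (T y.1) / NV y.1)
    ⟨C, Set.forall_mem_range.2 fun y => (div_le_iff₀ (hpos _ y.2)).2 (h _ y.2)⟩ ⟨x, hx⟩

end ratioSup

lemma half_le_log_of_two_le {n : ℕ} (hn : 2 ≤ n) : 1 / 2 ≤ log n := by
  have := log_le_log two_pos (show (2 : ℝ) ≤ n by exact_mod_cast hn)
  linarith [log_two_gt_d9]

/-- The operator norm of the identity `Z_2^n → ℓ_2^{2n}` is of order `log n`. -/
theorem znorm_to_l2_opnorm :
    ∃ c₁ : ℝ, 0 < c₁ ∧ ∃ c₂ : ℝ, 0 < c₂ ∧ ∀ n : ℕ, 2 ≤ n →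
      c₁ * Real.log n ≤ ratioSup znorm l2p (fun x : (Fin n → ℝ) × (Fin n → ℝ) => x) ∧
      ratioSup znorm l2p (fun x : (Fin n → ℝ) × (Fin n → ℝ) => x) ≤ c₂ * Real.log n := by
  refine ⟨1 / 2, by norm_num, 7, by norm_num, fun n hn => ⟨?_, ?_⟩⟩
  · have hone : ((KPF 1, 1) : (Fin n → ℝ) × (Fin n → ℝ)) ≠ 0 := fun h =>
      one_ne_zero (congrFun (congrArg Prod.snd h) ⟨0, by omega⟩)
    calc 1 / 2 * log n = log n / 2 := by ring
      _ ≤ _ := half_log_le_l2p_div_znorm (by omega)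
      _ ≤ _ := div_le_ratioSup (fun _ => znorm_pos) (fun x _ => l2p_le_mul_znorm x) hone
  · calc _ ≤ log n + 3 :=
          ratioSup_le (by positivity) (fun _ => znorm_pos) (fun x _ => l2p_le_mul_znorm x)
      _ ≤ 7 * log n := by linarith [half_le_log_of_two_le hn]
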